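/- In a deterministic Ex-BMDP, let π be an endogenous policy with induced state policy π̄, and let x_0 be drawn from some distribution μ over X. Then for every a ∈ A, t ≥ 1, and x, x' ∈ X with P(x_0 = x, x_t = x') > 0, writing s = f*(x) and s' = f*(x'), the multi-step inverse model admits the explicit formula P_π(a_0 = a | x_0 = x, x_t = x') = π̄(a|s) · P(s_t = s' | s_0 = s, a_0 = a) / Σ_{a'∈A} π̄(a'|s) · P(s_t = s' | s_0 = s, a_0 = a'), where P(s_t = s' | s_0 = s, a_0 = a) is the probability that the endogenous chain reaches s' in t steps when the first action is a and all subsequent actions are drawn from π̄. In particular, this value does not depend on the exogenous components f*_e(x), f*_e(x'). -/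
import Mathlib


open Finset

/-- `n`-step transition probabilities (matrix power) of a kernel `K`. -/
noncomputable def matPow {W : Type*} [Fintype W] [DecidableEq W]
    (K : W → W → ℝ) : ℕ → W → W → ℝ
  | 0, w, w' => if w = w' then 1 else 0
  | n + 1, w, w' => ∑ u : W, K w u * matPow K n u w'

/-- Evolve a (sub)distribution `ν` for `n` steps under the kernel `K`. -/
noncomputable def evolveDist {W : Type*} [Fintype W]
    (K : W → W → ℝ) (ν : W → ℝ) : ℕ → W → ℝ
  | 0, w => ν w
  | n + 1, w' => ∑ w : W, evolveDist K ν n w * K w w'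

/-- The Markov kernel on the endogenous states induced by a state policy `π̄`:
`P_S(s'|s) = Σ_a π̄(a|s)·1[T(s,a)=s']`. -/
noncomputable def endoKer {S A : Type*} [Fintype A] [DecidableEq S]
    (T : S → A → S) (πbar : S → A → ℝ) : S → S → ℝ :=
  fun s s' => ∑ a : A, πbar s a * (if T s a = s' then 1 else 0)

/-- The Markov kernel of the joint latent process `(s_t, e_t)` under policy `π`
(observations and actions marginalized out). -/
noncomputable def jointKer {S E X A : Type*} [Fintype X] [Fintype A] [DecidableEq S]
    (T : S → A → S) (Te : E → E → ℝ) (q : S → E → X → ℝ) (π : X → A → ℝ) :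
    S × E → S × E → ℝ :=
  fun w w' =>
    ∑ x : X, q w.1 w.2 x *
      ((∑ a : A, π x a * (if T w.1 a = w'.1 then 1 else 0)) * Te w.2 w'.2)

/-- The joint probability `P(x_0 = x, a_0 = a, x_t = x')` (for `t ≥ 1`) of the
Ex-BMDP process: `x_0` is emitted from `(s_0,e_0) ~ μ0`, the first action is
`a_0`, afterwards the policy `π` is executed, and `x_t` is observed. -/
noncomputable def jointXAX {S E X A : Type*}
    [Fintype S] [Fintype E] [Fintype X] [Fintype A]
    [DecidableEq S] [DecidableEq E] [DecidableEq X] [DecidableEq A]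
    (T : S → A → S) (Te : E → E → ℝ) (q : S → E → X → ℝ) (π : X → A → ℝ)
    (μ0 : S × E → ℝ) (x : X) (a : A) (x' : X) (t : ℕ) : ℝ :=
  ∑ w0 : S × E, μ0 w0 * q w0.1 w0.2 x * π x a *
    ∑ w : S × E,
      evolveDist (jointKer T Te q π)
        (fun w1 => (if w1.1 = T w0.1 a then (1 : ℝ) else 0) * Te w0.2 w1.2)
        (t - 1) w * q w.1 w.2 x'

/-!
STATEMENT 3: Explicit formula for the multi-step inverse model:
P_π(a_0 = a | x_0 = x, x_t = x')
  = π̄(a|s)·P(s_t = s'|s_0 = s, a_0 = a) / Σ_{a'} π̄(a'|s)·P(s_t = s'|s_0 = s, a_0 = a'),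
with s = f*(x), s' = f*(x'); in particular it does not depend on the exogenous
components f*_e(x), f*_e(x').
-/

private lemma matPow_succ_right {W : Type*} [Fintype W] [DecidableEq W]
    (K : W → W → ℝ) : ∀ (n : ℕ) (w w' : W),
    matPow K (n + 1) w w' = ∑ u : W, matPow K n w u * K u w'
  | 0, w, w' => by simp [matPow]
  | n + 1, w, w' => by
    show (∑ u : W, K w u * matPow K (n + 1) u w') = _
    calc ∑ u : W, K w u * matPow K (n + 1) u w'
        = ∑ u : W, K w u * ∑ v : W, matPow K n u v * K v w' := by
          simp_rw [matPow_succ_right K n]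
      _ = ∑ u : W, ∑ v : W, K w u * (matPow K n u v * K v w') := by
          simp_rw [Finset.mul_sum]
      _ = ∑ v : W, ∑ u : W, (K w u * matPow K n u v) * K v w' := by
          rw [Finset.sum_comm]; simp_rw [mul_assoc]
      _ = ∑ v : W, (∑ u : W, K w u * matPow K n u v) * K v w' := by
          simp_rw [Finset.sum_mul]
      _ = ∑ v : W, matPow K (n + 1) w v * K v w' := rfl

private lemma evolveDist_delta {W : Type*} [Fintype W] [DecidableEq W]
    (K : W → W → ℝ) (w0 : W) : ∀ (n : ℕ) (w : W),
    evolveDist K (fun u => if u = w0 then (1 : ℝ) else 0) n w = matPow K n w0 w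
  | 0, w => by simp [evolveDist, matPow, eq_comm]
  | n + 1, w => by
    show (∑ u : W, evolveDist K (fun u => if u = w0 then (1 : ℝ) else 0) n u * K u w) = _
    simp_rw [evolveDist_delta K w0 n]
    rw [matPow_succ_right]

private lemma evolve_factor {S E : Type*} [Fintype S] [Fintype E]
    (K1 : S → S → ℝ) (K2 : E → E → ℝ) (ν1 : S → ℝ) (ν2 : E → ℝ) :
    ∀ (n : ℕ) (w : S × E),
    evolveDist (fun w w' => K1 w.1 w'.1 * K2 w.2 w'.2) (fun w => ν1 w.1 * ν2 w.2) n w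
      = evolveDist K1 ν1 n w.1 * evolveDist K2 ν2 n w.2
  | 0, w => rfl
  | n + 1, w => by
    show (∑ u : S × E, evolveDist (fun w w' => K1 w.1 w'.1 * K2 w.2 w'.2)
        (fun w => ν1 w.1 * ν2 w.2) n u * (K1 u.1 w.1 * K2 u.2 w.2)) = _
    simp_rw [evolve_factor K1 K2 ν1 ν2 n]
    rw [Fintype.sum_prod_type]
    show _ = (∑ u : S, evolveDist K1 ν1 n u * K1 u w.1) *
        (∑ v : E, evolveDist K2 ν2 n v * K2 v w.2)
    rw [Finset.sum_mul_sum]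
    apply Finset.sum_congr rfl; intro u _
    apply Finset.sum_congr rfl; intro v _
    ring

theorem ac_state_inverse_model_explicit_formula
    {S E X A : Type*}
    [Fintype S] [Fintype E] [Fintype X] [Fintype A]
    [DecidableEq S] [DecidableEq E] [DecidableEq X] [DecidableEq A]
    [Nonempty S] [Nonempty E] [Nonempty X] [Nonempty A]
    -- deterministic Ex-BMDP data
    (T : S → A → S) (Te : E → E → ℝ) (q : S → E → X → ℝ)
    (fstar : X → S) (fstarE : X → E)
    (hTe_nonneg : ∀ e e', 0 ≤ Te e e') (hTe_sum : ∀ e, ∑ e' : E, Te e e' = 1)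
    (hq_nonneg : ∀ s e x, 0 ≤ q s e x) (hq_sum : ∀ s e, ∑ x : X, q s e x = 1)
    -- block assumption: the decoders recover the latent state on the support
    (hblock : ∀ s e x, 0 < q s e x → fstar x = s ∧ fstarE x = e)
    -- endogenous policy π and its induced state policy π̄
    (π : X → A → ℝ) (πbar : S → A → ℝ)
    (hπ_nonneg : ∀ x a, 0 ≤ π x a) (hπ_sum : ∀ x, ∑ a : A, π x a = 1)
    (hendo : ∀ x1 x2, fstar x1 = fstar x2 → π x1 = π x2)
    (hπbar : ∀ s e x, 0 < q s e x → ∀ a, πbar s a = π x a)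
    -- initial latent distribution
    (μ0 : S × E → ℝ)
    (hμ0_nonneg : ∀ w, 0 ≤ μ0 w) (hμ0_sum : ∑ w : S × E, μ0 w = 1)
    (x x' : X) (a : A) (t : ℕ) (ht : 1 ≤ t)
    -- P(x_0 = x, x_t = x') > 0
    (hpos : 0 < ∑ a' : A, jointXAX T Te q π μ0 x a' x' t) :
    jointXAX T Te q π μ0 x a x' t / (∑ a' : A, jointXAX T Te q π μ0 x a' x' t)
      = (πbar (fstar x) a * matPow (endoKer T πbar) (t - 1) (T (fstar x) a) (fstar x'))
          / (∑ a' : A,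
              πbar (fstar x) a' * matPow (endoKer T πbar) (t - 1) (T (fstar x) a') (fstar x')) := by
  set s0 := fstar x with hs0
  set e0 := fstarE x with he0
  set s' := fstar x' with hs'
  set e' := fstarE x' with he'
  -- factorization of the joint kernel
  have kfact : jointKer T Te q π
      = fun w w' => endoKer T πbar w.1 w'.1 * Te w.2 w'.2 := by
    funext w w'
    show (∑ y : X, q w.1 w.2 y *
        ((∑ b : A, π y b * (if T w.1 b = w'.1 then 1 else 0)) * Te w.2 w'.2)) = _
    have : ∀ y : X, q w.1 w.2 y *
        ((∑ b : A, π y b * (if T w.1 b = w'.1 then 1 else 0)) * Te w.2 w'.2)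
        = q w.1 w.2 y * (endoKer T πbar w.1 w'.1 * Te w.2 w'.2) := by
      intro y
      rcases eq_or_lt_of_le (hq_nonneg w.1 w.2 y) with h | h
      · rw [← h]; ring
      · congr 2
        unfold endoKer
        exact Finset.sum_congr rfl fun b _ => by rw [hπbar _ _ _ h b]
    simp_rw [this]
    rw [← Finset.sum_mul, hq_sum, one_mul]
  -- explicit formula for jointXAX
  have key : ∀ a' : A, jointXAX T Te q π μ0 x a' x' t
      = (μ0 (s0, e0) * q s0 e0 x * (evolveDist Te (Te e0) (t - 1) e' * q s' e' x'))
        * (π x a' * matPow (endoKer T πbar) (t - 1) (T s0 a') s') := by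
    intro a'
    unfold jointXAX
    rw [Finset.sum_eq_single (s0, e0)]
    · have inner : ∀ (w0 : S × E),
          evolveDist (jointKer T Te q π)
            (fun w1 => (if w1.1 = T w0.1 a' then (1 : ℝ) else 0) * Te w0.2 w1.2)
          = evolveDist
              (fun w w' => endoKer T πbar w.1 w'.1 * Te w.2 w'.2)
              (fun w1 => (fun u => if u = T w0.1 a' then (1 : ℝ) else 0) w1.1
                * (Te w0.2) w1.2) := by
        intro w0; rw [kfact]
      rw [inner (s0, e0)]
      rw [Finset.sum_eq_single (s', e')]
      · rw [evolve_factor (endoKer T πbar) Te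
            (fun u => if u = T (s0, e0).1 a' then (1 : ℝ) else 0) (Te (s0, e0).2)
            (t - 1) (s', e'), evolveDist_delta]
        ring
      · intro w _ hw
        have hq0 : q w.1 w.2 x' = 0 := by
          rcases eq_or_lt_of_le (hq_nonneg w.1 w.2 x') with h | h
          · exact h.symm
          · exact absurd (Prod.ext (hblock _ _ _ h).1.symm (hblock _ _ _ h).2.symm) hw
        rw [hq0, mul_zero]
      · intro h; exact absurd (Finset.mem_univ _) h
    · intro w0 _ hw0
      have hq0 : q w0.1 w0.2 x = 0 := by
        rcases eq_or_lt_of_le (hq_nonneg w0.1 w0.2 x) with h | h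
        · exact h.symm
        · exact absurd (Prod.ext (hblock _ _ _ h).1.symm (hblock _ _ _ h).2.symm) hw0
      rw [hq0]; ring
    · intro h; exact absurd (Finset.mem_univ _) h
  -- q s0 e0 x must be positive
  have hxpos : 0 < q s0 e0 x := by
    rcases eq_or_lt_of_le (hq_nonneg s0 e0 x) with h | h
    · exfalso
      have : (∑ a' : A, jointXAX T Te q π μ0 x a' x' t) = 0 := by
        apply Finset.sum_eq_zero; intro a' _
        rw [key a', ← h]; ring
      rw [this] at hpos; exact lt_irrefl 0 hpos
    · exact h
  have key2 : ∀ a' : A, jointXAX T Te q π μ0 x a' x' t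
      = (μ0 (s0, e0) * q s0 e0 x * (evolveDist Te (Te e0) (t - 1) e' * q s' e' x'))
        * (πbar s0 a' * matPow (endoKer T πbar) (t - 1) (T s0 a') s') := by
    intro a'; rw [key a', hπbar s0 e0 x hxpos a']
  set C := μ0 (s0, e0) * q s0 e0 x * (evolveDist Te (Te e0) (t - 1) e' * q s' e' x')
  have hsum : (∑ a' : A, jointXAX T Te q π μ0 x a' x' t)
      = C * ∑ a' : A, πbar s0 a' * matPow (endoKer T πbar) (t - 1) (T s0 a') s' := by
    rw [Finset.mul_sum]
    exact Finset.sum_congr rfl fun a' _ => key2 a'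
  have hC : C ≠ 0 := by
    intro h
    rw [hsum, h, zero_mul] at hpos
    exact lt_irrefl 0 hpos
  rw [key2 a, hsum, mul_div_mul_left _ _ hC]
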